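/- If M is a mixing quantum channel, then for every p ∈ (0,1] and every quantum channel M', the channel p M + (1-p) M' is mixing. -/

import Mathlib

open Matrix
open scoped ComplexOrder

noncomputable section

abbrev Mat (d : ℕ) := Matrix (Fin d) (Fin d) ℂ

/-- `K` is a Kraus representation of the linear map `Φ`. -/
def IsKrausRep {d : ℕ} (Φ : Mat d →ₗ[ℂ] Mat d) {n : ℕ} (K : Fin n → Mat d) : Prop :=
  (∀ A, Φ A = ∑ i, K i * A * (K i)ᴴ) ∧ ∑ i, (K i)ᴴ * K i = 1

/-- A quantum channel: completely positive trace-preserving map, i.e. admitting a Kraus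
representation with the normalization condition. -/
def IsCPTP {d : ℕ} (Φ : Mat d →ₗ[ℂ] Mat d) : Prop :=
  ∃ (n : ℕ) (K : Fin n → Mat d), IsKrausRep Φ K

/-- A density matrix: positive semidefinite with unit trace. -/
def IsDensity {d : ℕ} (ρ : Mat d) : Prop := ρ.PosSemidef ∧ ρ.trace = 1

/-- Ergodicity: the channel has a unique fixed point density matrix. -/
def IsErgodic {d : ℕ} (Φ : Mat d →ₗ[ℂ] Mat d) : Prop :=
  ∃! ρ : Mat d, IsDensity ρ ∧ Φ ρ = ρ

/-- The support of an operator, viewed as a subspace of `ℂ^d`. -/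
def supp {d : ℕ} (ρ : Mat d) : Submodule ℂ (Fin d → ℂ) := LinearMap.range ρ.mulVecLin

/-- The trace norm `‖A‖₁ = Tr √(A†A)`. -/
def traceNorm {d : ℕ} (A : Mat d) : ℝ :=
  (((Matrix.posSemidef_conjTranspose_mul_self A).1.eigenvectorUnitary.1 *
      Matrix.diagonal (((↑) : ℝ → ℂ) ∘ (√·) ∘ (Matrix.posSemidef_conjTranspose_mul_self A).1.eigenvalues) *
      (star (Matrix.posSemidef_conjTranspose_mul_self A).1.eigenvectorUnitary : Mat d)).trace).re

/-- Mixing: iterates of the channel converge in trace norm to a unique state. -/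
def IsMixing {d : ℕ} (Φ : Mat d →ₗ[ℂ] Mat d) : Prop :=
  ∃ ρs : Mat d, IsDensity ρs ∧ ∀ ρ : Mat d, IsDensity ρ →
    Filter.Tendsto (fun k : ℕ => traceNorm ((Φ ^ k) ρ - ρs)) Filter.atTop (nhds 0)

/-- A subspace `S` is invariant for a channel if every Kraus operator (of any Kraus
representation) maps `S` into itself. -/
def IsInvariantSubspace {d : ℕ} (Φ : Mat d →ₗ[ℂ] Mat d) (S : Submodule ℂ (Fin d → ℂ)) : Prop :=
  ∀ (n : ℕ) (K : Fin n → Mat d), IsKrausRep Φ K → ∀ i, ∀ x ∈ S, (K i).mulVec x ∈ S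

/-! Write `T = p • Φ + (1 - p) • Φ'`. Since `Φ` is mixing, its powers send every traceless
Hermitian matrix to `0` in trace norm, and by finite dimensionality uniformly so: some `Φ ^ n`
halves the trace norm of all of them. In `T ^ n = p ^ n • Φ ^ n + R` the remainder `R` is a
positive map scaling traces by `1 - p ^ n`, hence contracts the trace norm by that factor; so
`T ^ n` contracts traceless Hermitian matrices by `1 - p ^ n / 2 < 1`. The orbit of a state under
`T` is then Cauchy, and its limit attracts the orbits of all other states. -/

open scoped MatrixOrder
open Filter Topology

section TraceNorm

variable {d : ℕ}

lemma traceNorm_eq_re_trace_abs (A : Mat d) : traceNorm A = (CFC.abs A).trace.re := by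
  rw [CFC.abs, CFC.sqrt_eq_real_sqrt _ (star_mul_self_nonneg A), cfcₙ_eq_cfc,
    star_eq_conjTranspose, (posSemidef_conjTranspose_mul_self A).1.cfc_eq, IsHermitian.cfc,
    Unitary.conjStarAlgAut_apply]
  rfl

open scoped Matrix.Norms.L2Operator in
lemma continuous_traceNorm : Continuous (traceNorm : Mat d → ℝ) := by
  rw [funext traceNorm_eq_re_trace_abs]
  exact Complex.continuous_re.comp (continuous_id.matrix_trace.comp CFC.continuous_abs)

lemma traceNorm_nonneg (A : Mat d) : 0 ≤ traceNorm A := by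
  rw [traceNorm_eq_re_trace_abs]
  exact (Complex.nonneg_iff.mp (nonneg_iff_posSemidef.mp (CFC.abs_nonneg A)).trace_nonneg).1

lemma traceNorm_smul (r : ℂ) (A : Mat d) : traceNorm (r • A) = ‖r‖ * traceNorm A := by
  rw [traceNorm_eq_re_trace_abs, traceNorm_eq_re_trace_abs, CFC.abs_smul, trace_smul,
    Complex.real_smul, Complex.re_ofReal_mul]

lemma traceNorm_neg (A : Mat d) : traceNorm (-A) = traceNorm A := by
  rw [traceNorm_eq_re_trace_abs, traceNorm_eq_re_trace_abs, CFC.abs_neg]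

lemma Matrix.IsHermitian.traceNorm_eq_sum_abs_eigenvalues {A : Mat d} (hA : A.IsHermitian) :
    traceNorm A = ∑ i, |hA.eigenvalues i| := by
  rw [traceNorm_eq_re_trace_abs, CFC.abs_eq_cfc_norm A hA.isSelfAdjoint, hA.cfc_eq,
    IsHermitian.cfc, Unitary.conjStarAlgAut_apply, trace_mul_cycle, Unitary.coe_star_mul_self,
    one_mul, trace_diagonal]
  simp

lemma Matrix.IsHermitian.star_eigenvectorUnitary_mul_mul_apply_self {A : Mat d}
    (hA : A.IsHermitian) (i : Fin d) :
    (star (hA.eigenvectorUnitary : Mat d) * A * hA.eigenvectorUnitary) i i = hA.eigenvalues i := by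
  have h := hA.conjStarAlgAut_star_eigenvectorUnitary
  rw [Unitary.conjStarAlgAut_apply, Unitary.coe_star, star_star] at h
  rw [h, diagonal_apply_eq]
  rfl

lemma Matrix.IsHermitian.norm_apply_le_traceNorm {A : Mat d} (hA : A.IsHermitian) (i j : Fin d) :
    ‖A i j‖ ≤ traceNorm A := by
  set U := hA.eigenvectorUnitary
  have hentry : A i j = ∑ k, U i k * hA.eigenvalues k * star (U j k) := by
    conv_lhs => rw [hA.spectral_theorem, Unitary.conjStarAlgAut_apply]
    simp [mul_apply, diagonal]
    rfl
  rw [hentry, hA.traceNorm_eq_sum_abs_eigenvalues]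
  refine (norm_sum_le _ _).trans (Finset.sum_le_sum fun k _ => ?_)
  rw [norm_mul, norm_mul, norm_star, Complex.norm_real, Real.norm_eq_abs]
  have hik := entry_norm_bound_of_unitary U.2 i k
  have hjk := entry_norm_bound_of_unitary U.2 j k
  calc ‖U i k‖ * |hA.eigenvalues k| * ‖U j k‖ ≤ 1 * |hA.eigenvalues k| * 1 := by gcongr
    _ = |hA.eigenvalues k| := by ring

open scoped Matrix.Norms.Elementwise in
lemma Matrix.IsHermitian.norm_le_traceNorm {A : Mat d} (hA : A.IsHermitian) :
    ‖A‖ ≤ traceNorm A :=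
  (norm_le_iff (traceNorm_nonneg A)).mpr hA.norm_apply_le_traceNorm

lemma trace_star_mul_mul_unitary (P : Mat d) (U : unitary (Mat d)) :
    (star (U : Mat d) * P * U).trace = P.trace := by
  rw [trace_mul_cycle, Unitary.mul_star_self_of_mem U.2, one_mul]

/-- In an eigenbasis of `A`, each eigenvalue of `A` is the difference of the nonnegative diagonal
entries of `P` and `N` there. -/
lemma traceNorm_le_of_eq_sub {A P N : Mat d} (hP : P.PosSemidef) (hN : N.PosSemidef)
    (hA : A = P - N) : traceNorm A ≤ P.trace.re + N.trace.re := by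
  have hAh : A.IsHermitian := hA ▸ hP.1.sub hN.1
  set U := hAh.eigenvectorUnitary
  have hdiag : ∀ Q : Mat d, Q.PosSemidef → ∀ i, 0 ≤ ((star (U : Mat d) * Q * U) i i).re :=
    fun Q hQ i => (Complex.nonneg_iff.mp (hQ.conjTranspose_mul_mul_same (U : Mat d)).diag_nonneg).1
  rw [hAh.traceNorm_eq_sum_abs_eigenvalues, ← trace_star_mul_mul_unitary P U,
    ← trace_star_mul_mul_unitary N U, trace, trace, Complex.re_sum, Complex.re_sum,
    ← Finset.sum_add_distrib]
  refine Finset.sum_le_sum fun i _ => ?_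
  have heig : hAh.eigenvalues i
      = ((star (U : Mat d) * P * U) i i).re - ((star (U : Mat d) * N * U) i i).re := by
    rw [← Complex.ofReal_re (hAh.eigenvalues i),
      ← hAh.star_eigenvectorUnitary_mul_mul_apply_self]
    subst hA
    rw [Matrix.mul_sub, Matrix.sub_mul, Matrix.sub_apply, Complex.sub_re]
  rw [heig, diag_apply, diag_apply]
  have hPi := hdiag P hP i
  have hNi := hdiag N hN i
  exact abs_sub_le_iff.mpr ⟨by linarith, by linarith⟩

lemma Matrix.IsHermitian.exists_posSemidef_sub {A : Mat d} (hA : A.IsHermitian) :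
    ∃ P N : Mat d, P.PosSemidef ∧ N.PosSemidef ∧ A = P - N ∧
      traceNorm A = P.trace.re + N.trace.re := by
  refine ⟨A⁺, A⁻, nonneg_iff_posSemidef.mp (CFC.posPart_nonneg A),
    nonneg_iff_posSemidef.mp (CFC.negPart_nonneg A), (CFC.posPart_sub_negPart A hA).symm, ?_⟩
  rw [traceNorm_eq_re_trace_abs, ← CFC.posPart_add_negPart A hA, trace_add, Complex.add_re]

lemma traceNorm_add_le {A B : Mat d} (hA : A.IsHermitian) (hB : B.IsHermitian) :
    traceNorm (A + B) ≤ traceNorm A + traceNorm B := by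
  obtain ⟨P, N, hP, hN, rfl, hPN⟩ := hA.exists_posSemidef_sub
  obtain ⟨P', N', hP', hN', rfl, hPN'⟩ := hB.exists_posSemidef_sub
  refine (traceNorm_le_of_eq_sub (hP.add hP') (hN.add hN') (by abel)).trans_eq ?_
  rw [hPN, hPN', trace_add, trace_add, Complex.add_re, Complex.add_re]
  ring

lemma traceNorm_sub_le {A B : Mat d} (hA : A.IsHermitian) (hB : B.IsHermitian) :
    traceNorm (A - B) ≤ traceNorm A + traceNorm B := by
  rw [sub_eq_add_neg, ← traceNorm_neg B]
  exact traceNorm_add_le hA hB.neg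

lemma traceNorm_sum_le {ι : Type*} (s : Finset ι) {A : ι → Mat d}
    (hA : ∀ i ∈ s, (A i).IsHermitian) :
    traceNorm (∑ i ∈ s, A i) ≤ ∑ i ∈ s, traceNorm (A i) := by
  induction s using Finset.cons_induction with
  | empty => simp [traceNorm_eq_re_trace_abs]
  | cons a s _ ih =>
    rw [Finset.forall_mem_cons] at hA
    rw [Finset.sum_cons, Finset.sum_cons]
    calc _ ≤ traceNorm (A a) + traceNorm (∑ i ∈ s, A i) :=
          traceNorm_add_le hA.1 (isSelfAdjoint_sum s hA.2)
      _ ≤ _ := by gcongr; exact ih hA.2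

open scoped Matrix.Norms.L2Operator in
lemma isClosed_setOf_isDensity : IsClosed {ρ : Mat d | IsDensity ρ} := by
  simp_rw [IsDensity, ← nonneg_iff_posSemidef, Set.ofPred_and]
  exact CStarAlgebra.isClosed_nonneg.inter (isClosed_eq continuous_id.matrix_trace continuous_const)

end TraceNorm

section PosTraceScaling

variable {d : ℕ}

structure IsPosTraceScaling (c : ℝ) (Φ : Mat d →ₗ[ℂ] Mat d) : Prop where
  map_posSemidef : ∀ A : Mat d, A.PosSemidef → (Φ A).PosSemidef
  trace_map : ∀ A : Mat d, (Φ A).trace = c * A.trace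

def TracelessLipschitzWith (L : ℝ) (Φ : Mat d →ₗ[ℂ] Mat d) : Prop :=
  ∀ Δ : Mat d, Δ.IsHermitian → Δ.trace = 0 → traceNorm (Φ Δ) ≤ L * traceNorm Δ

namespace IsPosTraceScaling

variable {a b : ℝ} {Φ Ψ : Mat d →ₗ[ℂ] Mat d}

lemma of_isCPTP (h : IsCPTP Φ) : IsPosTraceScaling 1 Φ := by
  obtain ⟨n, K, hΦ, hK⟩ := h
  refine ⟨fun A hA => ?_, fun A => ?_⟩
  · rw [hΦ]
    exact posSemidef_sum _ fun i _ => hA.mul_mul_conjTranspose_same (K i)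
  · simp_rw [hΦ, trace_sum, trace_mul_cycle _ A, ← trace_sum, ← Finset.sum_mul, hK, one_mul,
      Complex.ofReal_one, one_mul]

lemma one : IsPosTraceScaling 1 (1 : Mat d →ₗ[ℂ] Mat d) :=
  ⟨fun _ hA => hA, fun A => by simp⟩

lemma add (hΦ : IsPosTraceScaling a Φ) (hΨ : IsPosTraceScaling b Ψ) :
    IsPosTraceScaling (a + b) (Φ + Ψ) :=
  ⟨fun A hA => (hΦ.map_posSemidef A hA).add (hΨ.map_posSemidef A hA),
    fun A => by simp [hΦ.trace_map, hΨ.trace_map, add_mul]⟩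

lemma mul (hΦ : IsPosTraceScaling a Φ) (hΨ : IsPosTraceScaling b Ψ) :
    IsPosTraceScaling (a * b) (Φ * Ψ) :=
  ⟨fun A hA => hΦ.map_posSemidef _ (hΨ.map_posSemidef A hA),
    fun A => by simp [hΦ.trace_map, hΨ.trace_map, mul_assoc]⟩

lemma pow (hΦ : IsPosTraceScaling a Φ) (k : ℕ) : IsPosTraceScaling (a ^ k) (Φ ^ k) := by
  induction k with
  | zero => simpa using one
  | succ k ih => simpa [pow_succ] using ih.mul hΦ

lemma pow_of_one (hΦ : IsPosTraceScaling 1 Φ) (k : ℕ) : IsPosTraceScaling 1 (Φ ^ k) := by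
  simpa using hΦ.pow k

lemma smul (hΦ : IsPosTraceScaling a Φ) {r : ℝ} (hr : 0 ≤ r) :
    IsPosTraceScaling (r * a) ((r : ℂ) • Φ) :=
  ⟨fun A hA => (hΦ.map_posSemidef A hA).smul (Complex.zero_le_real.mpr hr),
    fun A => by simp [hΦ.trace_map, mul_assoc]⟩

lemma isHermitian_map (hΦ : IsPosTraceScaling a Φ) {A : Mat d} (hA : A.IsHermitian) :
    (Φ A).IsHermitian := by
  obtain ⟨P, N, hP, hN, rfl, -⟩ := hA.exists_posSemidef_sub
  rw [map_sub]
  exact (hΦ.map_posSemidef P hP).1.sub (hΦ.map_posSemidef N hN).1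

lemma traceNorm_map_le (hΦ : IsPosTraceScaling a Φ) {A : Mat d} (hA : A.IsHermitian) :
    traceNorm (Φ A) ≤ a * traceNorm A := by
  obtain ⟨P, N, hP, hN, rfl, hPN⟩ := hA.exists_posSemidef_sub
  refine (traceNorm_le_of_eq_sub (hΦ.map_posSemidef P hP) (hΦ.map_posSemidef N hN)
    (map_sub Φ P N)).trans_eq ?_
  rw [hPN, hΦ.trace_map, hΦ.trace_map, Complex.re_ofReal_mul, Complex.re_ofReal_mul, mul_add]

lemma map_traceless (hΦ : IsPosTraceScaling a Φ) {Δ : Mat d} (hΔ : Δ.IsHermitian)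
    (h0 : Δ.trace = 0) : (Φ Δ).IsHermitian ∧ (Φ Δ).trace = 0 :=
  ⟨hΦ.isHermitian_map hΔ, by rw [hΦ.trace_map, h0, mul_zero]⟩

lemma isDensity_map (hΦ : IsPosTraceScaling 1 Φ) {ρ : Mat d} (hρ : IsDensity ρ) :
    IsDensity (Φ ρ) :=
  ⟨hΦ.map_posSemidef ρ hρ.1, by rw [hΦ.trace_map, hρ.2, Complex.ofReal_one, one_mul]⟩

/-- Expanding `(Φ + Ψ) ^ n`, every term but `Φ ^ n` is a composite of positive maps. -/
lemma exists_add_pow_eq_pow_add (hΦ : IsPosTraceScaling a Φ) (hΨ : IsPosTraceScaling b Ψ)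
    (n : ℕ) :
    ∃ R, IsPosTraceScaling ((a + b) ^ n - a ^ n) R ∧ (Φ + Ψ) ^ n = Φ ^ n + R := by
  induction n with
  | zero => exact ⟨0, ⟨fun _ _ => PosSemidef.zero, fun A => by simp⟩, by simp⟩
  | succ n ih =>
    obtain ⟨R, hR, hpow⟩ := ih
    refine ⟨Φ ^ n * Ψ + R * (Φ + Ψ), ?_, ?_⟩
    · convert ((hΦ.pow n).mul hΨ).add (hR.mul (hΦ.add hΨ)) using 1
      ring
    · rw [pow_succ, hpow, pow_succ]
      noncomm_ring

lemma tracelessLipschitzWith_add_pow (hΦ : IsPosTraceScaling a Φ) (hΨ : IsPosTraceScaling b Ψ)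
    {n : ℕ} {L : ℝ} (h : TracelessLipschitzWith L (Φ ^ n)) :
    TracelessLipschitzWith (L + ((a + b) ^ n - a ^ n)) ((Φ + Ψ) ^ n) := by
  obtain ⟨R, hR, hpow⟩ := hΦ.exists_add_pow_eq_pow_add hΨ n
  intro Δ hΔ h0
  rw [hpow, LinearMap.add_apply, add_mul]
  exact (traceNorm_add_le ((hΦ.pow n).isHermitian_map hΔ) (hR.isHermitian_map hΔ)).trans
    (add_le_add (h Δ hΔ h0) (hR.traceNorm_map_le hΔ))

end IsPosTraceScaling

lemma TracelessLipschitzWith.smul {L : ℝ} {Φ : Mat d →ₗ[ℂ] Mat d}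
    (h : TracelessLipschitzWith L Φ) (c : ℂ) :
    TracelessLipschitzWith (‖c‖ * L) (c • Φ) := by
  intro Δ hΔ h0
  rw [LinearMap.smul_apply, traceNorm_smul, mul_assoc]
  gcongr
  exact h Δ hΔ h0

end PosTraceScaling

section Mixing

variable {d : ℕ}

lemma Matrix.IsHermitian.exists_eq_smul_sub_of_trace_eq_zero {Δ σ : Mat d}
    (hΔ : Δ.IsHermitian) (h0 : Δ.trace = 0) (hσ : IsDensity σ) :
    ∃ (c : ℝ) (ρ₁ ρ₂ : Mat d), IsDensity ρ₁ ∧ IsDensity ρ₂ ∧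
      Δ = (c : ℂ) • (ρ₁ - ρ₂) := by
  obtain ⟨P, N, hP, hN, rfl, -⟩ := hΔ.exists_posSemidef_sub
  have hPN : N.trace = P.trace := by rw [trace_sub, sub_eq_zero] at h0; exact h0.symm
  have hP_re : P.trace = (P.trace.re : ℂ) :=
    Complex.ext rfl (Complex.nonneg_iff.mp hP.trace_nonneg).2.symm
  -- Normalizing `P + σ` and `N + σ` rather than `P` and `N` keeps the traces nonzero.
  have hc0 : 0 < P.trace.re + 1 := by linarith [(Complex.nonneg_iff.mp hP.trace_nonneg).1]
  set c : ℝ := P.trace.re + 1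
  have hc : (c : ℂ) ≠ 0 := Complex.ofReal_ne_zero.mpr hc0.ne'
  have hdens : ∀ Q : Mat d, Q.PosSemidef → Q.trace = P.trace →
      IsDensity (((c⁻¹ : ℝ) : ℂ) • (Q + σ)) := fun Q hQ htr =>
    ⟨(hQ.add hσ.1).smul (Complex.zero_le_real.mpr (inv_pos.mpr hc0).le), by
      rw [trace_smul, trace_add, htr, hσ.2, hP_re, smul_eq_mul, Complex.ofReal_inv,
        ← Complex.ofReal_one, ← Complex.ofReal_add]
      exact inv_mul_cancel₀ hc⟩
  refine ⟨c, _, _, hdens P hP rfl, hdens N hN hPN, ?_⟩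
  rw [← smul_sub, smul_smul, Complex.ofReal_inv, mul_inv_cancel₀ hc, one_smul]
  abel

lemma IsMixing.tendsto_traceNorm_pow_apply {Φ : Mat d →ₗ[ℂ] Mat d}
    (hΦ : IsPosTraceScaling 1 Φ) (hM : IsMixing Φ) {Δ : Mat d} (hΔ : Δ.IsHermitian)
    (h0 : Δ.trace = 0) :
    Tendsto (fun k => traceNorm ((Φ ^ k) Δ)) atTop (𝓝 0) := by
  obtain ⟨ρs, hρs, hconv⟩ := hM
  obtain ⟨c, ρ₁, ρ₂, hρ₁, hρ₂, rfl⟩ :=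
    hΔ.exists_eq_smul_sub_of_trace_eq_zero h0 hρs
  have hbound : ∀ k, traceNorm ((Φ ^ k) ((c : ℂ) • (ρ₁ - ρ₂))) ≤
      ‖(c : ℂ)‖ * (traceNorm ((Φ ^ k) ρ₁ - ρs) + traceNorm ((Φ ^ k) ρ₂ - ρs)) := by
    intro k
    rw [map_smul, map_sub, ← sub_sub_sub_cancel_right ((Φ ^ k) ρ₁) _ ρs, traceNorm_smul]
    gcongr
    exact traceNorm_sub_le (((hΦ.pow_of_one k).isDensity_map hρ₁).1.1.sub hρs.1.1)
      (((hΦ.pow_of_one k).isDensity_map hρ₂).1.1.sub hρs.1.1)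
  refine squeeze_zero (fun k => traceNorm_nonneg _) hbound ?_
  simpa using ((hconv ρ₁ hρ₁).add (hconv ρ₂ hρ₂)).const_mul ‖(c : ℂ)‖

def tracelessHermitian (d : ℕ) : Submodule ℝ (Mat d) :=
  selfAdjoint.submodule ℝ (Mat d) ⊓
    LinearMap.ker ((traceLinearMap (Fin d) ℂ ℂ).restrictScalars ℝ)

lemma mem_tracelessHermitian {A : Mat d} :
    A ∈ tracelessHermitian d ↔ A.IsHermitian ∧ A.trace = 0 := Iff.rfl

open scoped Matrix.Norms.Elementwise in
/-- Coordinates in a basis of the traceless Hermitian matrices are bounded by the trace norm,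
so pointwise decay on the basis is uniform decay. -/
lemma eventually_tracelessLipschitzWith_pow {a : ℝ} {Φ : Mat d →ₗ[ℂ] Mat d}
    (hΦ : IsPosTraceScaling a Φ)
    (h : ∀ Δ : Mat d, Δ.IsHermitian → Δ.trace = 0 →
      Tendsto (fun k => traceNorm ((Φ ^ k) Δ)) atTop (𝓝 0)) {ε : ℝ} (hε : 0 < ε) :
    ∀ᶠ k in atTop, TracelessLipschitzWith ε (Φ ^ k) := by
  let V := tracelessHermitian d
  let b := Module.finBasis ℝ V
  have hb : ∀ i, (b i : Mat d).IsHermitian ∧ (b i : Mat d).trace = 0 :=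
    fun i => mem_tracelessHermitian.mp (b i).2
  obtain ⟨C, hC0, hC⟩ := (LinearMap.toContinuousLinearMap b.equivFun.toLinearMap).bound
  have hcoord : ∀ (x : V) (i), |b.equivFun x i| ≤ C * traceNorm (x : Mat d) := fun x i =>
    calc |b.equivFun x i| ≤ ‖b.equivFun x‖ := norm_le_pi_norm (b.equivFun x) i
      _ ≤ C * ‖x‖ := hC x
      _ ≤ C * traceNorm (x : Mat d) := by
        gcongr
        exact (mem_tracelessHermitian.mp x.2).1.norm_le_traceNorm
  have hsum : Tendsto (fun k => ∑ i, traceNorm ((Φ ^ k) (b i : Mat d))) atTop (𝓝 0) := by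
    simpa using tendsto_finsetSum Finset.univ fun i _ => h _ (hb i).1 (hb i).2
  filter_upwards [hsum.eventually (ge_mem_nhds (div_pos hε hC0))] with k hk Δ hΔ h0
  let x : V := ⟨Δ, mem_tracelessHermitian.mpr ⟨hΔ, h0⟩⟩
  have hΔ_eq : Δ = ∑ i, b.equivFun x i • (b i : Mat d) := by
    calc Δ = ((∑ i, b.equivFun x i • b i : V) : Mat d) := by rw [b.sum_equivFun x]
      _ = _ := by simp only [Submodule.coe_sum, Submodule.coe_smul_of_tower]
  calc traceNorm ((Φ ^ k) Δ)
      ≤ ∑ i, traceNorm ((Φ ^ k) (b.equivFun x i • (b i : Mat d))) := by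
        rw [hΔ_eq, map_sum]
        exact traceNorm_sum_le _ fun i _ =>
          (hΦ.pow k).isHermitian_map ((IsSelfAdjoint.all _).smul (hb i).1)
    _ ≤ ∑ i, (C * traceNorm Δ) * traceNorm ((Φ ^ k) (b i : Mat d)) := by
        refine Finset.sum_le_sum fun i _ => ?_
        rw [LinearMap.map_smul_of_tower, ← Complex.coe_smul, traceNorm_smul, Complex.norm_real,
          Real.norm_eq_abs]
        gcongr
        · exact traceNorm_nonneg _
        · exact hcoord x i
    _ = (C * traceNorm Δ) * ∑ i, traceNorm ((Φ ^ k) (b i : Mat d)) := by rw [Finset.mul_sum]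
    _ ≤ (C * traceNorm Δ) * (ε / C) := by
        gcongr
        exact mul_nonneg hC0.le (traceNorm_nonneg Δ)
    _ = ε * traceNorm Δ := by field_simp

end Mixing

section Contraction

variable {d : ℕ} {T : Mat d →ₗ[ℂ] Mat d} {n : ℕ} {γ : ℝ}

lemma IsPosTraceScaling.tracelessLipschitzWith_pow (hT : IsPosTraceScaling 1 T) (hγ : 0 ≤ γ)
    (hcontr : TracelessLipschitzWith γ (T ^ n)) (k : ℕ) :
    TracelessLipschitzWith (γ ^ (k / n)) (T ^ k) := by
  have hblock : ∀ q, TracelessLipschitzWith (γ ^ q) ((T ^ n) ^ q) := by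
    intro q
    induction q with
    | zero => simp [TracelessLipschitzWith]
    | succ q ih =>
      intro Δ hΔ h0
      obtain ⟨hTΔ, hTΔ0⟩ := (hT.pow_of_one n).map_traceless hΔ h0
      rw [pow_succ, Module.End.mul_apply, pow_succ, mul_assoc]
      exact (ih _ hTΔ hTΔ0).trans (by gcongr; exact hcontr Δ hΔ h0)
  intro Δ hΔ h0
  obtain ⟨hTΔ, hTΔ0⟩ := (hT.pow_of_one (k % n)).map_traceless hΔ h0
  calc traceNorm ((T ^ k) Δ) = traceNorm (((T ^ n) ^ (k / n)) ((T ^ (k % n)) Δ)) := by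
        rw [← Module.End.mul_apply, ← pow_mul, ← pow_add, Nat.div_add_mod]
    _ ≤ γ ^ (k / n) * traceNorm ((T ^ (k % n)) Δ) := hblock _ _ hTΔ hTΔ0
    _ ≤ γ ^ (k / n) * traceNorm Δ := by
        gcongr
        simpa using (hT.pow_of_one (k % n)).traceNorm_map_le hΔ

lemma IsPosTraceScaling.traceNorm_pow_apply_sub_le (hT : IsPosTraceScaling 1 T) (hγ : 0 ≤ γ)
    (hcontr : TracelessLipschitzWith γ (T ^ n)) (k : ℕ) {ρ ρ' : Mat d} (hρ : IsDensity ρ)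
    (hρ' : IsDensity ρ') : traceNorm ((T ^ k) ρ - (T ^ k) ρ') ≤ 2 * γ ^ (k / n) := by
  have h2 : traceNorm (ρ - ρ') ≤ 2 := by
    refine (traceNorm_le_of_eq_sub hρ.1 hρ'.1 rfl).trans_eq ?_
    rw [hρ.2, hρ'.2, Complex.one_re]
    norm_num
  rw [← map_sub]
  refine (hT.tracelessLipschitzWith_pow hγ hcontr k _ (hρ.1.1.sub hρ'.1.1)
    (by rw [trace_sub, hρ.2, hρ'.2, sub_self])).trans ?_
  nlinarith [pow_nonneg hγ (k / n)]

/-- All orbits of states come together at rate `2 γ ^ (k / n)`, so the orbit of `ρ₀` is Cauchy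
and its limit attracts every orbit. -/
lemma IsPosTraceScaling.isMixing_of_tracelessLipschitzWith_pow (hT : IsPosTraceScaling 1 T)
    {ρ₀ : Mat d} (hρ₀ : IsDensity ρ₀) (hn : 0 < n) (hγ : 0 ≤ γ) (hγ1 : γ < 1)
    (hcontr : TracelessLipschitzWith γ (T ^ n)) : IsMixing T := by
  have hγk : Tendsto (fun k => 2 * γ ^ (k / n)) atTop (𝓝 0) := by
    simpa using ((tendsto_pow_atTop_nhds_zero_of_lt_one hγ hγ1).comp
      (Nat.tendsto_div_const_atTop hn.ne')).const_mul 2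
  have horbit : ∀ k, IsDensity ((T ^ k) ρ₀) := fun k => (hT.pow_of_one k).isDensity_map hρ₀
  have hσ : CauchySeq fun k => (T ^ k) ρ₀ := by
    let := Matrix.normedAddCommGroup (n := Fin d) (m := Fin d) (α := ℂ)
    refine cauchySeq_of_le_tendsto_0' _ (fun k m hkm => ?_) hγk
    have hm : (T ^ m) ρ₀ = (T ^ k) ((T ^ (m - k)) ρ₀) := by
      rw [← Module.End.mul_apply, ← pow_add, Nat.add_sub_cancel' hkm]
    rw [dist_eq_norm, hm]
    have hherm := (horbit k).1.1.sub ((hT.pow_of_one k).isDensity_map (horbit (m - k))).1.1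
    exact hherm.norm_le_traceNorm.trans
      (hT.traceNorm_pow_apply_sub_le hγ hcontr k hρ₀ (horbit _))
  obtain ⟨ρs, hρs⟩ := cauchySeq_tendsto_of_complete hσ
  refine ⟨ρs, isClosed_setOf_isDensity.mem_of_tendsto hρs (Eventually.of_forall horbit),
    fun ρ hρ => squeeze_zero (fun k => traceNorm_nonneg _) (fun k => ?_) hγk⟩
  have hlim : Tendsto (fun m => traceNorm ((T ^ k) ρ - (T ^ k) ((T ^ m) ρ₀))) atTop
      (𝓝 (traceNorm ((T ^ k) ρ - ρs))) := by
    refine (continuous_traceNorm.tendsto _).comp (tendsto_const_nhds.sub ?_)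
    simpa [Function.comp_def, ← Module.End.mul_apply, ← pow_add, add_comm k] using
      hρs.comp (tendsto_add_atTop_nat k)
  exact le_of_tendsto hlim (Eventually.of_forall fun m =>
    hT.traceNorm_pow_apply_sub_le hγ hcontr k hρ (horbit m))

end Contraction

/-- Stability of mixing under randomization: a convex combination of a mixing channel with an
arbitrary channel is mixing. -/
theorem mixing_stable_under_randomization {d : ℕ} (Φ Φ' : Mat d →ₗ[ℂ] Mat d)
    (hΦ : IsCPTP Φ) (hΦ' : IsCPTP Φ') (hM : IsMixing Φ)
    (p : ℝ) (hp : 0 < p) (hp1 : p ≤ 1) :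
    IsMixing ((p : ℂ) • Φ + ((1 - p : ℝ) : ℂ) • Φ') := by
  have hΦ₁ := IsPosTraceScaling.of_isCPTP hΦ
  have hpΦ : IsPosTraceScaling p ((p : ℂ) • Φ) := by simpa using hΦ₁.smul hp.le
  have hqΦ' : IsPosTraceScaling (1 - p) (((1 - p : ℝ) : ℂ) • Φ') := by
    simpa using (IsPosTraceScaling.of_isCPTP hΦ').smul (sub_nonneg.mpr hp1)
  obtain ⟨n, hhalf, hn⟩ := ((eventually_tracelessLipschitzWith_pow hΦ₁
    (fun Δ hΔ h0 => hM.tendsto_traceNorm_pow_apply hΦ₁ hΔ h0) one_half_pos).and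
    (eventually_gt_atTop 0)).exists
  have hcontr := hpΦ.tracelessLipschitzWith_add_pow hqΦ' (L := p ^ n * (1 / 2))
    (by simpa [smul_pow, Complex.norm_real, abs_of_pos hp] using hhalf.smul ((p : ℂ) ^ n))
  rw [add_sub_cancel, one_pow] at hcontr
  have hT : IsPosTraceScaling 1 ((p : ℂ) • Φ + ((1 - p : ℝ) : ℂ) • Φ') := by
    simpa using hpΦ.add hqΦ'
  obtain ⟨ρs, hρs, -⟩ := hM
  refine hT.isMixing_of_tracelessLipschitzWith_pow hρs hn ?_ ?_ hcontr
  · linarith [pow_le_one₀ hp.le hp1 (n := n), pow_pos hp n]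
  · linarith [pow_pos hp n]
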